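/- Let f be a norm on ℝ^p, let (a, b) be a linear classifier with a ≠ 0, let ρ > 0, let x_F ∈ ℝ^p satisfy ⟪a, x_F⟫ < b, and let x_RCF be an optimal robust counterfactual of x_F under f with robustness norm equal to f itself and radius ρ, with x_RCF ≠ x_F. Set v := (1 / f(x_RCF − x_F)) • (x_RCF − x_F). Then the point x_S := x_RCF − ρ • v lies exactly on the hyperplane: ⟪a, x_S⟫ = b. -/
import Mathlib


open Finset

noncomputable section

/-- The standard inner product on `Fin p → ℝ`. -/
def dot {p : ℕ} (a x : Fin p → ℝ) : ℝ := ∑ k, a k * x k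

/-- `f` is a norm on `ℝ^p`. -/
def IsNorm {p : ℕ} (f : (Fin p → ℝ) → ℝ) : Prop :=
  (∀ x, f x = 0 ↔ x = 0) ∧ (∀ (c : ℝ) (x : Fin p → ℝ), f (c • x) = |c| * f x) ∧
    (∀ x y, f (x + y) ≤ f x + f y)

/-- The dual norm `f*(w) = sup { ⟪w, v⟫ : f v ≤ 1 }`. -/
def dualNorm {p : ℕ} (f : (Fin p → ℝ) → ℝ) (w : Fin p → ℝ) : ℝ :=
  sSup {t : ℝ | ∃ v : Fin p → ℝ, f v ≤ 1 ∧ t = dot w v}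

/-- `xCF` is an optimal counterfactual of the factual `xF` (classified 'No') under norm `f`. -/
def IsOptCF {p : ℕ} (a : Fin p → ℝ) (b : ℝ) (f : (Fin p → ℝ) → ℝ)
    (xF xCF : Fin p → ℝ) : Prop :=
  b ≤ dot a xCF ∧ ∀ z : Fin p → ℝ, b ≤ dot a z → f (xCF - xF) ≤ f (z - xF)

/-- `xRCF` is an optimal robust counterfactual of the factual `xF` (classified 'No')
under norm `f`, with robustness norm `g` and radius `ρ`. -/
def IsOptRCF {p : ℕ} (a : Fin p → ℝ) (b : ℝ) (f g : (Fin p → ℝ) → ℝ) (ρ : ℝ)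
    (xF xRCF : Fin p → ℝ) : Prop :=
  (∀ s : Fin p → ℝ, g s ≤ ρ → b ≤ dot a (xRCF + s)) ∧
    ∀ z : Fin p → ℝ, (∀ s : Fin p → ℝ, g s ≤ ρ → b ≤ dot a (z + s)) →
      f (xRCF - xF) ≤ f (z - xF)

/-- `w` is a subgradient of `f` at `x₀`. -/
def IsSubgradient {p : ℕ} (f : (Fin p → ℝ) → ℝ) (x₀ w : Fin p → ℝ) : Prop :=
  ∀ y : Fin p → ℝ, f x₀ + dot w (y - x₀) ≤ f y


lemma dot_add' {p : ℕ} (a x y : Fin p → ℝ) : dot a (x + y) = dot a x + dot a y := by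
  simp [dot, mul_add, Finset.sum_add_distrib]

lemma dot_smul' {p : ℕ} (a : Fin p → ℝ) (c : ℝ) (x : Fin p → ℝ) :
    dot a (c • x) = c * dot a x := by
  simp [dot, Finset.mul_sum, mul_left_comm]

lemma dot_neg' {p : ℕ} (a x : Fin p → ℝ) : dot a (-x) = -dot a x := by
  simp [dot, Finset.sum_neg_distrib]

lemma dot_sub' {p : ℕ} (a x y : Fin p → ℝ) : dot a (x - y) = dot a x - dot a y := by
  rw [sub_eq_add_neg, dot_add', dot_neg']; ring

/-- Corollary 4(iii): when the robustness norm equals the counterfactual norm, the point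
`x_S = x_RCF − ρ • v` (with `v` the normalized counterfactual direction) lies exactly on
the hyperplane. -/
theorem rcf_touch_point_on_hyperplane {p : ℕ} (hp : 1 ≤ p)
    (f : (Fin p → ℝ) → ℝ) (hf : IsNorm f)
    (a : Fin p → ℝ) (ha : a ≠ 0) (b : ℝ) (ρ : ℝ) (hρ : 0 < ρ)
    (xF xRCF : Fin p → ℝ) (hxF : dot a xF < b)
    (hopt : IsOptRCF a b f f ρ xF xRCF) (hne : xRCF ≠ xF) :
    dot a (xRCF - ρ • ((1 / f (xRCF - xF)) • (xRCF - xF))) = b := by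
  obtain ⟨hf0, hfsmul, hfadd⟩ := hf
  obtain ⟨hfeas, hoptm⟩ := hopt
  set d : Fin p → ℝ := xRCF - xF with hd
  have hfneg : ∀ x : Fin p → ℝ, f (-x) = f x := by
    intro x
    have := hfsmul (-1) x
    simpa using this
  have hf0' : f 0 = 0 := (hf0 0).mpr rfl
  have hfnonneg : ∀ x : Fin p → ℝ, 0 ≤ f x := by
    intro x
    have h := hfadd x (-x)
    rw [hfneg, add_neg_cancel, hf0'] at h
    linarith
  have hfd : 0 < f d := by
    rcases lt_or_eq_of_le (hfnonneg d) with h | h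
    · exact h
    · exfalso
      exact hne (sub_eq_zero.mp ((hf0 d).mp h.symm))
  set v : Fin p → ℝ := (1 / f d) • d with hv
  have hfv : f v = 1 := by
    rw [hv, hfsmul, abs_of_pos (by positivity : (0:ℝ) < 1 / f d)]
    field_simp
  have hdav : dot a v = (1 / f d) * dot a d := dot_smul' a _ d
  -- the set of attack values
  set S : Set ℝ := {t : ℝ | ∃ s : Fin p → ℝ, f s ≤ ρ ∧ t = dot a s} with hS
  have hS0 : (0:ℝ) ∈ S := ⟨0, by rw [hf0']; exact hρ.le, by simp [dot]⟩
  have hSne : S.Nonempty := ⟨0, hS0⟩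
  have hbdd : BddAbove S := by
    refine ⟨dot a xRCF - b, ?_⟩
    rintro t ⟨s, hs, rfl⟩
    have h1 : f (-s) ≤ ρ := by rwa [hfneg]
    have := hfeas (-s) h1
    rw [dot_add', dot_neg'] at this
    linarith
  set C : ℝ := sSup S with hC
  have hC0 : 0 ≤ C := le_csSup hbdd hS0
  have hmemle : ∀ s : Fin p → ℝ, f s ≤ ρ → dot a s ≤ C := fun s hs =>
    le_csSup hbdd ⟨s, hs, rfl⟩
  have hlow : ∀ s : Fin p → ℝ, f s ≤ ρ → -C ≤ dot a s := by
    intro s hs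
    have := hmemle (-s) (by rwa [hfneg])
    rw [dot_neg'] at this
    linarith
  have hA : b + C ≤ dot a xRCF := by
    have : C ≤ dot a xRCF - b := csSup_le hSne (by
      rintro t ⟨s, hs, rfl⟩
      have h1 : f (-s) ≤ ρ := by rwa [hfneg]
      have := hfeas (-s) h1
      rw [dot_add', dot_neg'] at this
      linarith)
    linarith
  have hB : ρ * dot a v ≤ C := by
    have hmem : f (ρ • v) ≤ ρ := by
      rw [hfsmul, hfv, abs_of_pos hρ]; simp
    have := hmemle (ρ • v) hmem
    rwa [dot_smul'] at this
  have hdd : dot a d = dot a xRCF - dot a xF := dot_sub' a xRCF xF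
  have hCle : dot a xRCF ≤ b + C := by
    by_contra h
    push_neg at h
    have hdenpos : 0 < dot a xRCF - dot a xF := by linarith
    set t : ℝ := (b + C - dot a xF) / (dot a xRCF - dot a xF) with ht
    have htpos : 0 < t := by
      apply div_pos <;> linarith
    have htlt : t < 1 := by
      rw [ht, div_lt_one hdenpos]; linarith
    have htd : t * dot a d = b + C - dot a xF := by
      rw [hdd, ht]; field_simp
    have hzfeas : ∀ s : Fin p → ℝ, f s ≤ ρ → b ≤ dot a ((xF + t • d) + s) := by
      intro s hs
      rw [dot_add', dot_add', dot_smul']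
      have := hlow s hs
      linarith [htd]
    have hle := hoptm (xF + t • d) hzfeas
    have hz : (xF + t • d) - xF = t • d := by abel
    rw [hz, hfsmul, abs_of_pos htpos] at hle
    nlinarith
  have hE : dot a xRCF = b + C := le_antisymm hCle hA
  have hN : dot a d = b + C - dot a xF := by rw [hdd, hE]
  have hNpos : 0 < b + C - dot a xF := by linarith
  have hdavpos : 0 < dot a v := by
    rw [hdav, hN]; positivity
  have hfdv : f d * dot a v = b + C - dot a xF := by
    rw [hdav, ← hN]; field_simp
  have hD : C ≤ ρ * dot a v := by
    by_contra h
    push_neg at h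
    obtain ⟨w, hwS, hwgt⟩ := exists_lt_of_lt_csSup hSne h
    obtain ⟨s, hs, rfl⟩ := hwS
    have hspos : 0 < dot a s := lt_trans (by positivity) hwgt
    set t : ℝ := (b + C - dot a xF) / dot a s with ht
    have htpos : 0 < t := div_pos hNpos hspos
    have hts : t * dot a s = b + C - dot a xF := by rw [ht]; field_simp
    have hzfeas : ∀ s' : Fin p → ℝ, f s' ≤ ρ → b ≤ dot a ((xF + t • s) + s') := by
      intro s' hs'
      rw [dot_add', dot_add', dot_smul']
      have := hlow s' hs'
      linarith
    have hle := hoptm (xF + t • s) hzfeas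
    have hz : (xF + t • s) - xF = t • s := by abel
    rw [hz, hfsmul, abs_of_pos htpos] at hle
    -- f d ≤ t * f s ≤ t * ρ, and f d * dot a v = b + C - dot a xF = t * dot a s
    have h1 : f d ≤ t * ρ := le_trans hle (by nlinarith)
    nlinarith
  have hCv : C = ρ * dot a v := le_antisymm hD hB
  rw [dot_sub', dot_smul']
  show dot a xRCF - ρ * dot a v = b
  rw [hE, hCv]; ring
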